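/- Anisotropic conformable Hardy type inequality with weights (compactly supported case): let α ∈ (0,1], let Ω ⊆ (0,∞)^n be open, let p_k > 1 and L_k ∈ ℝ for k = 1,…,n, and let W_k, H_k : Ω → ℝ be continuous with W_k ≥ 0 and H_k ≥ 0. Let v : Ω → ℝ be continuously differentiable with v > 0 on Ω, and assume that for each k the function F_k(x) = W_k(x)·|D^α_{x_k} v(x)|^{p_k−2}·D^α_{x_k} v(x) is continuously differentiable on Ω and satisfies −D^α_{x_k} F_k(x) ≥ L_k·H_k(x)·v(x)^{p_k−1} for all x ∈ Ω. Then for every nonnegative continuously differentiable function u with compact support in Ω: ∑_{k=1}^n ∫_Ω W_k(x)·|D^α_{x_k} u(x)|^{p_k} d_α x ≥ ∑_{k=1}^n L_k ∫_Ω H_k(x)·u(x)^{p_k} d_α x. -/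

import Mathlib

/-!
Fix a coordinate `k` and test the inequality for `v` against the Picone quotient
`φ = F_k u^{p_k} v^{1-p_k}`, which is `C¹` with compact support in `Ω`. Since
`x_k^{1-α} x_k^{α-1} = 1`, the integral of `D^α_{x_k} φ` against `d_α x` is the Lebesgue integral
of `∂_k φ` against the weight `∏_{j ≠ k} x_j^{α-1}`, which does not depend on `x_k`; integration
by parts along `x_k` shows that it vanishes. Expanding `D^α_{x_k} φ` by the product and chain
rules, the term containing `D^α_{x_k} F_k` is at most `-L_k H_k u^{p_k}`, and the remaining terms
are at most `W_k |D^α_{x_k} u|^{p_k}` by Picone's inequality, itself a consequence of Young's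
inequality. Integrating against `d_α x` and summing over `k` gives the theorem.
-/

open Filter Topology MeasureTheory

/-- The conformable partial derivative of order `α` in the `k`-th coordinate:
`D^α_{x_k} f (x) = x_k^{1-α} ∂f/∂x_k (x)`. -/
noncomputable def confPDeriv (α : ℝ) {n : ℕ} (f : (Fin n → ℝ) → ℝ) (k : Fin n)
    (x : Fin n → ℝ) : ℝ :=
  (x k) ^ (1 - α) * deriv (fun t : ℝ => f (Function.update x k t)) (x k)

open Function

theorem young_inequality_rpow_sub_one {p : ℝ} (hp : 1 < p) {a b : ℝ} (ha : 0 ≤ a)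
    (hb : 0 ≤ b) :
    p * a ^ (p - 1) * b ≤ (p - 1) * a ^ p + b ^ p := by
  have hq : (p / (p - 1)).HolderConjugate p := (Real.HolderConjugate.conjExponent hp).symm
  have h := Real.young_inequality_of_nonneg (Real.rpow_nonneg ha (p - 1)) hb hq
  rw [← Real.rpow_mul ha, mul_div_cancel₀ p (sub_ne_zero.2 hp.ne')] at h
  calc p * a ^ (p - 1) * b = p * (a ^ (p - 1) * b) := by ring
    _ ≤ p * (a ^ p / (p / (p - 1)) + b ^ p / p) := by gcongr
    _ = (p - 1) * a ^ p + b ^ p := by field_simp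

theorem picone_inequality {p : ℝ} (hp : 1 < p) {s : ℝ} (hs : 0 ≤ s) (a b : ℝ) :
    |b| ^ (p - 2) * b * (p * s ^ (p - 1) * a - (p - 1) * s ^ p * b) ≤ |a| ^ p := by
  have h1 : |b| ^ (p - 2) * |b| = |b| ^ (p - 1) := by
    rw [← Real.rpow_add_one' (abs_nonneg b) (by linarith)]; ring_nf
  have h2 : |b| ^ (p - 1) * |b| = |b| ^ p := by
    rw [← Real.rpow_add_one' (abs_nonneg b) (by linarith)]; ring_nf
  have hba : |b| ^ (p - 2) * b * a ≤ |b| ^ (p - 1) * |a| := by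
    rw [← h1, mul_assoc, mul_assoc, ← abs_mul]
    exact mul_le_mul_of_nonneg_left (le_abs_self _) (Real.rpow_nonneg (abs_nonneg b) _)
  have hbb : |b| ^ (p - 2) * b * b = |b| ^ p := by
    rw [mul_assoc, ← abs_mul_abs_self, ← mul_assoc, h1, h2]
  have hyoung := young_inequality_rpow_sub_one hp (mul_nonneg hs (abs_nonneg b)) (abs_nonneg a)
  rw [Real.mul_rpow hs (abs_nonneg b), Real.mul_rpow hs (abs_nonneg b)] at hyoung
  calc |b| ^ (p - 2) * b * (p * s ^ (p - 1) * a - (p - 1) * s ^ p * b)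
      = p * s ^ (p - 1) * (|b| ^ (p - 2) * b * a)
          - (p - 1) * s ^ p * (|b| ^ (p - 2) * b * b) := by ring
    _ ≤ p * s ^ (p - 1) * (|b| ^ (p - 1) * |a|) - (p - 1) * s ^ p * |b| ^ p := by
        rw [hbb]; gcongr
    _ ≤ |a| ^ p := by linarith

/-- The left side is `D^α_{x_k}(F u^p v^{1-p})` expanded by the product and chain rules, with
`c = D^α_{x_k} F`, `a = D^α_{x_k} u`, `b = D^α_{x_k} v` and `F = w |b|^{p-2} b`. -/
theorem picone_hardy_pointwise {p : ℝ} (hp : 1 < p) {w l u v a b c : ℝ} (hw : 0 ≤ w)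
    (hu : 0 ≤ u) (hv : 0 < v) (hc : c ≤ -(l * v ^ (p - 1))) :
    c * (u ^ p * v ^ (1 - p)) + w * |b| ^ (p - 2) * b *
        (p * u ^ (p - 1) * a * v ^ (1 - p) + u ^ p * ((1 - p) * v ^ (1 - p - 1) * b))
      ≤ w * |a| ^ p - l * u ^ p := by
  have hvp : v ^ (1 - p) = (v ^ (p - 1))⁻¹ := by
    rw [← Real.rpow_neg hv.le, neg_sub]
  have hvp' : v ^ (1 - p - 1) = (v ^ p)⁻¹ := by
    rw [← Real.rpow_neg hv.le, sub_sub_cancel_left]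
  have hsource : c * (u ^ p * v ^ (1 - p)) ≤ -(l * u ^ p) := by
    calc c * (u ^ p * v ^ (1 - p)) ≤ -(l * v ^ (p - 1)) * (u ^ p * v ^ (1 - p)) :=
          mul_le_mul_of_nonneg_right hc (by positivity)
      _ = -(l * u ^ p) := by rw [hvp]; field_simp
  have hpicone := picone_inequality hp (div_nonneg hu hv.le) a b
  rw [Real.div_rpow hu hv.le, Real.div_rpow hu hv.le] at hpicone
  have hcross : |b| ^ (p - 2) * b *
      (p * u ^ (p - 1) * a * v ^ (1 - p) + u ^ p * ((1 - p) * v ^ (1 - p - 1) * b))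
      ≤ |a| ^ p := by
    convert hpicone using 2
    rw [hvp, hvp']
    ring
  linarith [mul_le_mul_of_nonneg_left hcross hw]

theorem DifferentiableAt.hasDerivAt_comp_update {𝕜 ι E : Type*} [NontriviallyNormedField 𝕜]
    [Fintype ι] [DecidableEq ι] [NormedAddCommGroup E] [NormedSpace 𝕜 E] {f : (ι → 𝕜) → E}
    {x : ι → 𝕜} (hf : DifferentiableAt 𝕜 f x) (k : ι) :
    HasDerivAt (fun t => f (update x k t)) (fderiv 𝕜 f x (Pi.single k 1)) (x k) := by
  have hf' : HasFDerivAt f (fderiv 𝕜 f x) (update x k (x k)) := by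
    rw [update_eq_self]; exact hf.hasFDerivAt
  exact hf'.comp_hasDerivAt (x k) (_root_.hasDerivAt_update x k (x k))

section Conformable

variable {α : ℝ} {n : ℕ} {f g : (Fin n → ℝ) → ℝ} {k : Fin n} {x : Fin n → ℝ}

theorem confPDeriv_eq_fderiv (hf : DifferentiableAt ℝ f x) :
    confPDeriv α f k x = x k ^ (1 - α) * fderiv ℝ f x (Pi.single k 1) := by
  rw [confPDeriv, (hf.hasDerivAt_comp_update k).deriv]

theorem confPDeriv_of_notMem_tsupport (hx : x ∉ tsupport f) : confPDeriv α f k x = 0 := by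
  rw [confPDeriv_eq_fderiv (HasFDerivAt.of_notMem_tsupport ℝ hx).differentiableAt,
    fderiv_of_notMem_tsupport ℝ hx, zero_apply, mul_zero]

theorem confPDeriv_mul (hf : DifferentiableAt ℝ f x) (hg : DifferentiableAt ℝ g x) :
    confPDeriv α (fun y => f y * g y) k x
      = confPDeriv α f k x * g x + f x * confPDeriv α g k x := by
  rw [confPDeriv_eq_fderiv (f := fun y => f y * g y) (hf.mul hg), confPDeriv_eq_fderiv hf,
    confPDeriv_eq_fderiv hg, fderiv_fun_mul hf hg]
  simp only [add_apply, smul_apply, smul_eq_mul]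
  ring

theorem confPDeriv_rpow_const {r : ℝ} (hf : DifferentiableAt ℝ f x) (hr : f x ≠ 0 ∨ 1 ≤ r) :
    confPDeriv α (fun y => f y ^ r) k x = r * f x ^ (r - 1) * confPDeriv α f k x := by
  have hsec := (hf.hasDerivAt_comp_update k).differentiableAt
  simp only [confPDeriv]
  rw [deriv_rpow_const hsec (by rwa [update_eq_self]), update_eq_self]
  ring

theorem ContDiffOn.continuousOn_confPDeriv {Ω : Set (Fin n → ℝ)} (hf : ContDiffOn ℝ 1 f Ω)
    (hΩ : IsOpen Ω) (hΩpos : Ω ⊆ {x | ∀ k, 0 < x k}) :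
    ContinuousOn (confPDeriv α f k) Ω := by
  have hcont : ContinuousOn (fun x => x k ^ (1 - α) * fderiv ℝ f x (Pi.single k 1)) Ω :=
    ((continuous_apply k).continuousOn.rpow_const fun x hx => Or.inl (hΩpos hx k).ne').mul
      ((hf.continuousOn_fderiv_of_isOpen hΩ le_rfl).clm_apply continuousOn_const)
  refine hcont.congr fun x hx => confPDeriv_eq_fderiv ?_
  exact (hf.differentiableOn one_ne_zero).differentiableAt (hΩ.mem_nhds hx)

theorem continuousOn_prod_rpow {Ω : Set (Fin n → ℝ)} (hΩpos : Ω ⊆ {x | ∀ k, 0 < x k})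
    (s : Finset (Fin n)) (a : ℝ) : ContinuousOn (fun x : Fin n → ℝ => ∏ j ∈ s, x j ^ a) Ω :=
  continuousOn_finsetProd _ fun j _ =>
    (continuous_apply j).continuousOn.rpow_const fun _ hx => Or.inl (hΩpos hx j).ne'

theorem integral_confPDeriv_mul_weight_eq_zero {Ω : Set (Fin n → ℝ)} (hΩ : IsOpen Ω)
    (hΩpos : Ω ⊆ {x | ∀ k, 0 < x k}) {φ : (Fin n → ℝ) → ℝ} (hφ : ContDiffOn ℝ 1 φ Ω)
    (hφc : HasCompactSupport φ) (hφΩ : tsupport φ ⊆ Ω) :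
    ∫ x in Ω, confPDeriv α φ k x * ∏ j, x j ^ (α - 1) = 0 := by
  set e : Fin n → ℝ := Pi.single k 1
  set w : (Fin n → ℝ) → ℝ := fun x => ∏ j ∈ Finset.univ.erase k, x j ^ (α - 1)
  have hdiff (x : Fin n → ℝ) : DifferentiableAt ℝ φ x := by
    by_cases hx : x ∈ Ω
    · exact (hφ.differentiableOn one_ne_zero).differentiableAt (hΩ.mem_nhds hx)
    · exact (HasFDerivAt.of_notMem_tsupport ℝ fun h => hx (hφΩ h)).differentiableAt
  have hw : ContinuousOn w Ω := continuousOn_prod_rpow hΩpos _ _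
  have hw_line (x : Fin n → ℝ) (t : ℝ) : w (x + t • e) = w x :=
    Finset.prod_congr rfl fun j hj => by simp [e, Finset.ne_of_mem_erase hj]
  have hintegrable (g : (Fin n → ℝ) → ℝ) (hg : ContinuousOn g Ω) (h0 : ∀ x ∉ tsupport φ, g x = 0) :
      Integrable g :=
    ((hg.mono hφΩ).integrableOn_compact hφc).integrable_of_forall_notMem_eq_zero h0
  have hparts := integral_bilinear_hasLineDerivAt_right_eq_neg_left_of_integrable
    (B := ContinuousLinearMap.mul ℝ ℝ) (f' := fun x => fderiv ℝ φ x e) (g' := 0) (v := e)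
    (hintegrable _ (((hφ.continuousOn_fderiv_of_isOpen hΩ le_rfl).clm_apply continuousOn_const).mul hw)
      fun x hx => by simp [fderiv_of_notMem_tsupport ℝ hx])
    (by simp)
    (hintegrable _ (hφ.continuousOn.mul hw) fun x hx => by simp [image_eq_zero_of_notMem_tsupport hx])
    (fun x _ => (hdiff x).hasFDerivAt.hasLineDerivAt e)
    (fun x _ => by simp [HasLineDerivAt, hw_line, hasDerivAt_const])
  have hflux : ∫ x, fderiv ℝ φ x e * w x = 0 := by simpa using hparts.symm
  calc ∫ x in Ω, confPDeriv α φ k x * ∏ j, x j ^ (α - 1)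
      = ∫ x in Ω, fderiv ℝ φ x e * w x := by
        refine setIntegral_congr_fun hΩ.measurableSet fun x hx => ?_
        have hxk : x k ^ (1 - α) * x k ^ (α - 1) = 1 := by
          rw [← Real.rpow_add (hΩpos hx k)]; simp
        rw [confPDeriv_eq_fderiv (hdiff x), ← Finset.mul_prod_erase _ _ (Finset.mem_univ k)]
        linear_combination (fderiv ℝ φ x e * w x) * hxk
    _ = ∫ x, fderiv ℝ φ x e * w x := setIntegral_eq_integral_of_forall_compl_eq_zero
        fun x hx => by simp [fderiv_of_notMem_tsupport ℝ fun h => hx (hφΩ h)]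
    _ = 0 := hflux

theorem confPDeriv_picone_le {p w l : ℝ} (hp : 1 < p) {F u v : (Fin n → ℝ) → ℝ}
    (hF : DifferentiableAt ℝ F x) (hu : DifferentiableAt ℝ u x) (hv : DifferentiableAt ℝ v x)
    (hw : 0 ≤ w) (hu0 : 0 ≤ u x) (hv0 : 0 < v x)
    (hFv : F x = w * |confPDeriv α v k x| ^ (p - 2) * confPDeriv α v k x)
    (hFl : l * v x ^ (p - 1) ≤ -confPDeriv α F k x) :
    confPDeriv α (fun y => F y * (u y ^ p * v y ^ (1 - p))) k x
      ≤ w * |confPDeriv α u k x| ^ p - l * u x ^ p := by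
  have hup := hu.rpow_const (p := p) (Or.inr hp.le)
  have hvp := hv.rpow_const (p := 1 - p) (Or.inl hv0.ne')
  rw [confPDeriv_mul (g := fun y => u y ^ p * v y ^ (1 - p)) hF (hup.mul hvp),
    confPDeriv_mul hup hvp, confPDeriv_rpow_const hu (Or.inr hp.le),
    confPDeriv_rpow_const hv (Or.inl hv0.ne'), hFv]
  exact picone_hardy_pointwise hp hw hu0 hv0 (by linarith)

theorem conformable_hardy_coord {Ω : Set (Fin n → ℝ)} (hΩ : IsOpen Ω)
    (hΩpos : Ω ⊆ {x | ∀ k, 0 < x k}) {p L : ℝ} (hp : 1 < p) {W H F v u : (Fin n → ℝ) → ℝ}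
    (hW : ContinuousOn W Ω) (hH : ContinuousOn H Ω) (hW0 : ∀ x ∈ Ω, 0 ≤ W x)
    (hv : ContDiffOn ℝ 1 v Ω) (hv0 : ∀ x ∈ Ω, 0 < v x) (hF : ContDiffOn ℝ 1 F Ω)
    (hFv : ∀ x ∈ Ω, F x = W x * |confPDeriv α v k x| ^ (p - 2) * confPDeriv α v k x)
    (hFH : ∀ x ∈ Ω, L * H x * v x ^ (p - 1) ≤ -confPDeriv α F k x)
    (hu : ContDiffOn ℝ 1 u Ω) (hu0 : ∀ x ∈ Ω, 0 ≤ u x) (huc : HasCompactSupport u)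
    (huΩ : tsupport u ⊆ Ω) :
    L * ∫ x in Ω, H x * u x ^ p * ∏ j, x j ^ (α - 1)
      ≤ ∫ x in Ω, W x * |confPDeriv α u k x| ^ p * ∏ j, x j ^ (α - 1) := by
  have hp0 : p ≠ 0 := by positivity
  have hdiff {f : (Fin n → ℝ) → ℝ} (hf : ContDiffOn ℝ 1 f Ω) {x} (hx : x ∈ Ω) :
      DifferentiableAt ℝ f x :=
    (hf.differentiableOn one_ne_zero).differentiableAt (hΩ.mem_nhds hx)
  set φ := fun x => F x * (u x ^ p * v x ^ (1 - p))
  set ρ := fun x : Fin n → ℝ => ∏ j, x j ^ (α - 1)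
  have hφ : ContDiffOn ℝ 1 φ Ω :=
    hF.mul ((hu.rpow_const_of_le (by exact_mod_cast hp.le)).mul
      (hv.rpow_const_of_ne fun x hx => (hv0 x hx).ne'))
  have hφu : support φ ⊆ support u := fun x hx hux => hx (by simp [φ, hux, Real.zero_rpow hp0])
  have hρ : ContinuousOn ρ Ω := continuousOn_prod_rpow hΩpos _ _
  have hintegrable {g : (Fin n → ℝ) → ℝ} (hg : ContinuousOn g Ω)
      (h0 : ∀ x ∈ Ω \ tsupport u, g x = 0) : IntegrableOn g Ω :=
    ((hg.mono huΩ).integrableOn_compact huc).of_forall_sdiff_eq_zero hΩ.measurableSet h0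
  have hφ_int : IntegrableOn (fun x => confPDeriv α φ k x * ρ x) Ω :=
    hintegrable ((hφ.continuousOn_confPDeriv hΩ hΩpos).mul hρ) fun x hx => by
      rw [confPDeriv_of_notMem_tsupport fun h => hx.2 (closure_mono hφu h), zero_mul]
  have hH_int : IntegrableOn (fun x => H x * u x ^ p * ρ x) Ω :=
    hintegrable ((hH.mul (hu.continuousOn.rpow_const fun _ _ => Or.inr (by positivity))).mul hρ)
      fun x hx => by simp [image_eq_zero_of_notMem_tsupport hx.2, Real.zero_rpow hp0]
  have hW_int : IntegrableOn (fun x => W x * |confPDeriv α u k x| ^ p * ρ x) Ω :=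
    hintegrable ((hW.mul ((hu.continuousOn_confPDeriv hΩ hΩpos).abs.rpow_const
        fun _ _ => Or.inr (by positivity))).mul hρ)
      fun x hx => by simp [confPDeriv_of_notMem_tsupport hx.2, Real.zero_rpow hp0]
  have hpointwise (x) (hx : x ∈ Ω) : confPDeriv α φ k x * ρ x + L * (H x * u x ^ p * ρ x)
      ≤ W x * |confPDeriv α u k x| ^ p * ρ x := by
    have hρ0 : 0 ≤ ρ x := Finset.prod_nonneg fun j _ => Real.rpow_nonneg (hΩpos hx j).le _
    have hpicone := mul_le_mul_of_nonneg_right (confPDeriv_picone_le hp (hdiff hF hx)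
      (hdiff hu hx) (hdiff hv hx) (hW0 x hx) (hu0 x hx) (hv0 x hx) (hFv x hx) (hFH x hx)) hρ0
    linarith
  calc L * ∫ x in Ω, H x * u x ^ p * ρ x
      = ∫ x in Ω, (confPDeriv α φ k x * ρ x + L * (H x * u x ^ p * ρ x)) := by
        rw [integral_add hφ_int (hH_int.const_mul L), integral_const_mul,
          integral_confPDeriv_mul_weight_eq_zero hΩ hΩpos hφ (huc.mono hφu)
            ((closure_mono hφu).trans huΩ), zero_add]
    _ ≤ ∫ x in Ω, W x * |confPDeriv α u k x| ^ p * ρ x :=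
        setIntegral_mono_on (hφ_int.add (hH_int.const_mul L)) hW_int hΩ.measurableSet hpointwise

end Conformable

theorem anisotropic_conformable_hardy_general (α : ℝ)
    (n : ℕ) (Ω : Set (Fin n → ℝ)) (hΩ : IsOpen Ω)
    (hΩpos : Ω ⊆ {x : Fin n → ℝ | ∀ k, 0 < x k})
    (p : Fin n → ℝ) (hp : ∀ k, 1 < p k) (L : Fin n → ℝ)
    (W H : Fin n → (Fin n → ℝ) → ℝ)
    (hWcont : ∀ k, ContinuousOn (W k) Ω) (hHcont : ∀ k, ContinuousOn (H k) Ω)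
    (hW0 : ∀ k, ∀ x ∈ Ω, 0 ≤ W k x)
    (v : (Fin n → ℝ) → ℝ) (hv : ContDiffOn ℝ 1 v Ω) (hv0 : ∀ x ∈ Ω, 0 < v x)
    (hF : ∀ k, ContDiffOn ℝ 1
      (fun x => W k x * |confPDeriv α v k x| ^ (p k - 2) * confPDeriv α v k x) Ω)
    (hineq : ∀ k, ∀ x ∈ Ω,
      -(confPDeriv α
          (fun y => W k y * |confPDeriv α v k y| ^ (p k - 2) * confPDeriv α v k y) k x)
        ≥ L k * H k x * v x ^ (p k - 1))
    (u : (Fin n → ℝ) → ℝ) (hu : ContDiffOn ℝ 1 u Ω) (hu0 : ∀ x ∈ Ω, 0 ≤ u x)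
    (husupp : HasCompactSupport u) (husubset : tsupport u ⊆ Ω) :
    ∑ k, ∫ x in Ω, W k x * |confPDeriv α u k x| ^ (p k) * ∏ j, (x j) ^ (α - 1)
      ≥ ∑ k, L k * ∫ x in Ω, H k x * u x ^ (p k) * ∏ j, (x j) ^ (α - 1) :=
  Finset.sum_le_sum fun k _ => conformable_hardy_coord hΩ hΩpos (hp k) (hWcont k) (hHcont k)
    (hW0 k) hv hv0 (hF k) (fun _ _ => rfl) (hineq k) hu hu0 husupp husubset

/-- Anisotropic conformable Hardy type inequality with weights (compactly supported
case): if `v > 0` satisfies `−D^α_{x_k}(W_k |D^α_{x_k} v|^{p_k-2} D^α_{x_k} v)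
≥ L_k H_k v^{p_k-1}` for each `k`, then for every nonnegative `C¹` function `u`
with compact support in `Ω`,
`∑ₖ ∫_Ω W_k |D^α_{x_k} u|^{p_k} d_α x ≥ ∑ₖ L_k ∫_Ω H_k u^{p_k} d_α x`. -/
theorem anisotropic_conformable_hardy (α : ℝ) (hα : α ∈ Set.Ioc (0 : ℝ) 1)
    (n : ℕ) (Ω : Set (Fin n → ℝ)) (hΩ : IsOpen Ω)
    (hΩpos : Ω ⊆ {x : Fin n → ℝ | ∀ k, 0 < x k})
    (p : Fin n → ℝ) (hp : ∀ k, 1 < p k) (L : Fin n → ℝ)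
    (W H : Fin n → (Fin n → ℝ) → ℝ)
    (hWcont : ∀ k, ContinuousOn (W k) Ω) (hHcont : ∀ k, ContinuousOn (H k) Ω)
    (hW0 : ∀ k, ∀ x ∈ Ω, 0 ≤ W k x) (hH0 : ∀ k, ∀ x ∈ Ω, 0 ≤ H k x)
    (v : (Fin n → ℝ) → ℝ) (hv : ContDiffOn ℝ 1 v Ω) (hv0 : ∀ x ∈ Ω, 0 < v x)
    (hF : ∀ k, ContDiffOn ℝ 1
      (fun x => W k x * |confPDeriv α v k x| ^ (p k - 2) * confPDeriv α v k x) Ω)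
    (hineq : ∀ k, ∀ x ∈ Ω,
      -(confPDeriv α
          (fun y => W k y * |confPDeriv α v k y| ^ (p k - 2) * confPDeriv α v k y) k x)
        ≥ L k * H k x * v x ^ (p k - 1))
    (u : (Fin n → ℝ) → ℝ) (hu : ContDiffOn ℝ 1 u Ω) (hu0 : ∀ x ∈ Ω, 0 ≤ u x)
    (husupp : HasCompactSupport u) (husubset : tsupport u ⊆ Ω) :
    ∑ k, ∫ x in Ω, W k x * |confPDeriv α u k x| ^ (p k) * ∏ j, (x j) ^ (α - 1)
      ≥ ∑ k, L k * ∫ x in Ω, H k x * u x ^ (p k) * ∏ j, (x j) ^ (α - 1) :=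
  anisotropic_conformable_hardy_general α n Ω hΩ hΩpos p hp L W H hWcont hHcont hW0 v hv hv0 hF
    hineq u hu hu0 husupp husubset
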